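/- Let Γ be a graph with vertex set V, let σ ∈ V, let Π be a σ-projection on Γ, and let R ⊆ V be a nonempty finite Π-convex subset. Then σ ∈ R. -/

import Mathlib

open SimpleGraph

variable {V : Type*}

/-- The closed neighbourhood of a vertex: the vertex together with all its neighbours. -/
def closedNbhd (G : SimpleGraph V) (ρ : V) : Set V := insert ρ {w | G.Adj ρ w}

/-- `ρ` is dominated by `π` within the subgraph of `G` induced on `S`:
`π ∈ S`, `π ≠ ρ`, and `N(ρ) ∩ S ⊆ N(π)`. -/
def DominatedIn (G : SimpleGraph V) (S : Set V) (ρ π : V) : Prop :=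
  π ∈ S ∧ π ≠ ρ ∧ ∀ w ∈ S, w ∈ closedNbhd G ρ → w ∈ closedNbhd G π

/-- The subgraph of `G` induced on `S` is dismantlable: the vertices of `S` can be
arranged in a (finite) list such that each vertex except the last is dominated in the
subgraph induced on it and the later vertices. -/
def DismantlableOn (G : SimpleGraph V) (S : Set V) : Prop :=
  ∃ l : List V, l.Nodup ∧ (∀ v, v ∈ l ↔ v ∈ S) ∧
    ∀ (i : ℕ) (h : i < l.length), i < l.length - 1 →
      ∃ π, DominatedIn G {w | w ∈ l.drop i} (l[i]'h) π

/-- A graph is dismantlable if the subgraph induced on all of its vertices is. -/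
def Dismantlable (G : SimpleGraph V) : Prop := DismantlableOn G Set.univ

/-- The set `Π*(ρ)` of all vertices appearing in pairs of `Π ρ`. -/
def PiStar (Pr : V → Finset (Sym2 V)) (ρ : V) : Set V := {v | ∃ p ∈ Pr ρ, v ∈ p}

/-- `Pr` is a `σ`-projection: it assigns to each vertex `ρ ≠ σ` a nonempty finite set of
unordered pairs of vertices such that (i) every finite set `R` containing a vertex other
than `σ` has an exposed vertex, and (ii) there is no cycle `ρ₀, …, ρ_{m-1}` with
`ρ_{i+1} ∈ Π*(ρ_i)` (indices mod `m`). -/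
structure IsSigmaProjection (G : SimpleGraph V) (σ : V) (Pr : V → Finset (Sym2 V)) : Prop where
  nonempty : ∀ ρ, ρ ≠ σ → (Pr ρ).Nonempty
  exposed : ∀ R : Finset V, (∃ ρ ∈ R, ρ ≠ σ) →
    ∃ ρ ∈ R, ρ ≠ σ ∧ ∃ p ∈ Pr ρ, ∀ π ∈ p,
      ∀ w ∈ R, w ∈ closedNbhd G ρ → w ∈ closedNbhd G π
  acyclic : ¬ ∃ m : ℕ, 0 < m ∧ ∃ f : ZMod m → V,
    ∀ i, f i ≠ σ ∧ f (i + 1) ∈ PiStar Pr (f i)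

/-- `R` is `Π`-convex: for every `ρ ∈ R` other than `σ`, each pair in `Π ρ` meets `R`. -/
def PiConvex (σ : V) (Pr : V → Finset (Sym2 V)) (R : Set V) : Prop :=
  ∀ ρ ∈ R, ρ ≠ σ → ∀ p ∈ Pr ρ, ∃ v ∈ p, v ∈ R

/-- The orbit `HR` of a set `R` under a group action. -/
def orbitSet (H : Type*) [Group H] [MulAction H V] (R : Set V) : Set V :=
  {x | ∃ h : H, ∃ ρ ∈ R, x = h • ρ}

/-- The geometric realization of the flag complex of `G` inside `ℝ^V`: the union over
all (nonempty) cliques of the convex hulls of the corresponding standard basis vectors. -/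
def flagRealization [DecidableEq V] (G : SimpleGraph V) : Set (V → ℝ) :=
  ⋃ (Δ : Set V) (_ : Δ.Nonempty) (_ : G.IsClique Δ),
    convexHull ℝ ((fun v => (Pi.single v 1 : V → ℝ)) '' Δ)

/-- A walk is a geodesic if its length equals the distance between its endpoints. -/
def IsGeodesic (G : SimpleGraph V) {u v : V} (p : G.Walk u v) : Prop :=
  p.length = G.dist u v

/-- `G` is `δ`-hyperbolic: for any geodesic triangle, each vertex on one side is within
distance `δ` of some vertex on the union of the other two sides. -/
def Hyperbolic (G : SimpleGraph V) (δ : ℕ) : Prop :=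
  ∀ (u v w : V) (p : G.Walk u v) (q : G.Walk v w) (r : G.Walk w u),
    IsGeodesic G p → IsGeodesic G q → IsGeodesic G r →
    ∀ t ∈ p.support, ∃ s, (s ∈ q.support ∨ s ∈ r.support) ∧ G.dist t s ≤ δ

/-- The Rips graph `Γ_D`: same vertices, two distinct vertices adjacent iff their
graph distance in `G` is at most `D`. -/
def ripsGraph (G : SimpleGraph V) (D : ℕ) : SimpleGraph V where
  Adj u v := u ≠ v ∧ G.dist u v ≤ D
  symm := by
    constructor
    intro u v h
    exact ⟨h.1.symm, by rw [SimpleGraph.dist_comm]; exact h.2⟩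
  loopless := by
    constructor
    intro v h
    exact h.1 rfl

/-- The ball of radius `r` around a set `C` of vertices. -/
def ballSet (G : SimpleGraph V) (C : Set V) (r : ℕ) : Set V :=
  {v | ∃ c ∈ C, G.dist v c ≤ r}

/-!
If `σ ∉ R`, convexity and nonemptiness of `Π` give every vertex of `R` a successor in
`R ∩ Π*(ρ)`. Iterating a choice of successors inside the finite set `R` must eventually cycle,
and that cycle is forbidden by acyclicity of `Π`.
-/

namespace Function

variable {α : Type*}

theorem exists_mem_periodicPts [Finite α] [Nonempty α] (f : α → α) :
    ∃ x, x ∈ periodicPts f := by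
  obtain ⟨x₀⟩ := ‹Nonempty α›
  obtain ⟨a, b, hab, heq⟩ :=
    Set.finite_univ.exists_lt_map_eq_of_forall_mem (f := (f^[·] x₀)) fun _ => Set.mem_univ _
  refine ⟨f^[a] x₀, mk_mem_periodicPts (Nat.sub_pos_of_lt hab) ?_⟩
  rw [IsPeriodicPt, IsFixedPt, ← iterate_add_apply, Nat.sub_add_cancel hab.le, heq]

theorem IsPeriodicPt.iterate_val_add_one {f : α → α} {n : ℕ} [NeZero n] {x : α}
    (h : IsPeriodicPt f n x) (i : ZMod n) : f^[(i + 1).val] x = f (f^[i.val] x) := by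
  rw [ZMod.val_add, ZMod.val_one_eq_one_mod, Nat.add_mod_mod, h.iterate_mod_apply,
    iterate_succ_apply']

end Function

theorem Set.Finite.exists_zmod_cycle_of_forall_exists_rel {α : Type*} {r : α → α → Prop}
    {S : Set α} (hS : S.Finite) (hne : S.Nonempty) (hsucc : ∀ a ∈ S, ∃ b ∈ S, r a b) :
    ∃ m : ℕ, 0 < m ∧ ∃ c : ZMod m → α, ∀ i, c i ∈ S ∧ r (c i) (c (i + 1)) := by
  have : Finite S := hS
  have : Nonempty S := hne.to_subtype
  choose g hgS hgr using hsucc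
  let next : S → S := fun a => ⟨g a a.2, hgS a a.2⟩
  obtain ⟨x, hx⟩ := Function.exists_mem_periodicPts next
  set m := Function.minimalPeriod next x
  have hm : 0 < m := Function.minimalPeriod_pos_of_mem_periodicPts hx
  have : NeZero m := ⟨hm.ne'⟩
  refine ⟨m, hm, fun i => next^[i.val] x, fun i => ⟨Subtype.prop _, ?_⟩⟩
  show r (next^[i.val] x : α) (next^[(i + 1).val] x : α)
  rw [(Function.isPeriodicPt_minimalPeriod next x).iterate_val_add_one]
  exact hgr _ _

theorem PiConvex.exists_mem_piStar {σ : V} {Pr : V → Finset (Sym2 V)} {R : Set V}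
    (hconv : PiConvex σ Pr R) {ρ : V} (hρ : ρ ∈ R) (hρσ : ρ ≠ σ)
    (hPr : (Pr ρ).Nonempty) :
    ∃ v ∈ R, v ∈ PiStar Pr ρ := by
  obtain ⟨p, hp⟩ := hPr
  obtain ⟨v, hvp, hvR⟩ := hconv ρ hρ hρσ p hp
  exact ⟨v, hvR, p, hp, hvp⟩

theorem sigma_mem_of_piConvex {V : Type*} (G : SimpleGraph V)
    (σ : V) (Pr : V → Finset (Sym2 V)) (hPr : IsSigmaProjection G σ Pr)
    (R : Set V) (hfin : R.Finite) (hne : R.Nonempty) (hconv : PiConvex σ Pr R) :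
    σ ∈ R := by
  by_contra hσ
  have hR : ∀ ρ ∈ R, ρ ≠ σ := fun ρ hρ h => hσ (h ▸ hρ)
  obtain ⟨m, hm, c, hc⟩ := hfin.exists_zmod_cycle_of_forall_exists_rel hne
    fun ρ hρ => hconv.exists_mem_piStar hρ (hR ρ hρ) (hPr.nonempty ρ (hR ρ hρ))
  exact hPr.acyclic ⟨m, hm, c, fun i => ⟨hR _ (hc i).1, (hc i).2⟩⟩
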